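/- Let M be a metric space and let q : ℝ → M be a map that is Lipschitz with constant K_ins. Let f : ℝ⁷ → ℝ (with ℝ⁷ carrying the supremum norm) be Lipschitz with constant L and satisfy f(0) = 0. Let h ≥ 0 and K_feat ≥ 0, let x ∈ ℝ⁷ with ‖x‖ ≤ K_feat·h, and let α⁰ be a real number with |α⁰| ≤ (π/8)·‖x‖. Then dist(q(f(x)), q(α⁰)) ≤ (L + π/8)·K_feat·K_ins·h. -/
import Mathlib

/-- Conditional O(h) proximity bound: with `q : ℝ → M` a `K_ins`-Lipschitz
insertion operator, `f : ℝ⁷ → ℝ` (sup norm) an `L`-Lipschitz centred predictor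
(`f 0 = 0`), features bounded by `‖x‖ ≤ K_feat·h`, and classical angle
`|α⁰| ≤ (π/8)·‖x‖`, the neural and classical insertions satisfy
`dist(q(f x), q(α⁰)) ≤ (L + π/8)·K_feat·K_ins·h`. -/
theorem proximity_bound_Oh {M : Type*} [MetricSpace M]
    (q : ℝ → M) (Kins : NNReal) (hq : LipschitzWith Kins q)
    (f : (Fin 7 → ℝ) → ℝ) (L : NNReal) (hf : LipschitzWith L f) (hf0 : f 0 = 0)
    (h Kfeat : ℝ) (hh : 0 ≤ h) (hKfeat : 0 ≤ Kfeat)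
    (x : Fin 7 → ℝ) (hx : ‖x‖ ≤ Kfeat * h)
    (α₀ : ℝ) (hα : |α₀| ≤ (Real.pi / 8) * ‖x‖) :
    dist (q (f x)) (q α₀) ≤ ((L : ℝ) + Real.pi / 8) * Kfeat * (Kins : ℝ) * h := by
  have hfx : |f x| ≤ (L : ℝ) * ‖x‖ := by
    have := hf.dist_le_mul x 0
    simpa [hf0, Real.dist_eq, dist_eq_norm] using this
  have h1 : dist (f x) α₀ ≤ ((L : ℝ) + Real.pi / 8) * ‖x‖ := by
    calc dist (f x) α₀ ≤ |f x| + |α₀| := by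
          simpa [Real.dist_eq] using abs_sub (f x) α₀
      _ ≤ (L : ℝ) * ‖x‖ + (Real.pi / 8) * ‖x‖ := add_le_add hfx hα
      _ = ((L : ℝ) + Real.pi / 8) * ‖x‖ := by ring
  have hq' := hq.dist_le_mul (f x) α₀
  have hpi : (0 : ℝ) ≤ (L : ℝ) + Real.pi / 8 := by positivity
  calc dist (q (f x)) (q α₀) ≤ (Kins : ℝ) * dist (f x) α₀ := hq'
    _ ≤ (Kins : ℝ) * (((L : ℝ) + Real.pi / 8) * (Kfeat * h)) := by
        apply mul_le_mul_of_nonneg_left _ Kins.coe_nonneg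
        exact h1.trans (mul_le_mul_of_nonneg_left hx hpi)
    _ = ((L : ℝ) + Real.pi / 8) * Kfeat * (Kins : ℝ) * h := by ring
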